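/- arXiv:2507.10148 — 4 statements merged into one kernel-verified Lean document; each statement's English description precedes it below -/
import Mathlib

section
/- Let S be a nonempty finite subset of ℝ^n and let v belong to the convex hull of S. If the discount factor δ satisfies 1 − 1/|S| ≤ δ < 1, then there exists a single element a ∈ S and a point v'' in the convex hull of S such that v = (1 − δ)·a + δ·v''. -/
/-- One-step decomposition of Sorin's lemma: for a nonempty finite set
`S ⊆ ℝ^n`, any `v` in the convex hull of `S` can, for any discount factor `δ`
with `1 - 1/|S| ≤ δ < 1`, be written as `(1-δ)•a + δ•v''` with `a ∈ S` and
`v''` in the convex hull of `S`. -/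
theorem stmt_5 {n : ℕ} (S : Set (EuclideanSpace ℝ (Fin n)))
    (hfin : S.Finite) (hne : S.Nonempty)
    (v : EuclideanSpace ℝ (Fin n)) (hv : v ∈ convexHull ℝ S)
    (δ : ℝ) (hδ1 : 1 - 1 / (S.ncard : ℝ) ≤ δ) (hδ2 : δ < 1) :
    ∃ a ∈ S, ∃ v'' ∈ convexHull ℝ S, v = (1 - δ) • a + δ • v'' := by
  classical
  set s : Finset (EuclideanSpace ℝ (Fin n)) := hfin.toFinset with hs
  have hScoe : S = (s : Set _) := (hfin.coe_toFinset).symm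
  have hsne : s.Nonempty := by rwa [hs, Set.Finite.toFinset_nonempty]
  have hcard : (S.ncard : ℝ) = (s.card : ℝ) := by
    rw [hs, Set.ncard_eq_toFinset_card _ hfin]
  have hcardpos : (0 : ℝ) < (s.card : ℝ) := by
    exact_mod_cast Finset.card_pos.mpr hsne
  rw [hScoe] at hv ⊢
  obtain ⟨w, hw0, hw1, hwv⟩ := Finset.mem_convexHull'.mp hv
  -- find a with w a ≥ 1 / card
  obtain ⟨a, ha, hwa⟩ : ∃ a ∈ s, 1 / (s.card : ℝ) ≤ w a := by
    refine Finset.exists_le_of_sum_le hsne ?_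
    rw [hw1, Finset.sum_const, nsmul_eq_mul, mul_one_div,
      div_self (ne_of_gt hcardpos)]
  have hδS : 1 - δ ≤ 1 / (s.card : ℝ) := by
    rw [hcard] at hδ1; linarith
  -- case δ ≤ 0 : card = 1
  rcases le_or_gt δ 0 with hδ0 | hδ0
  · have h1 : (1 : ℝ) ≤ 1 / (s.card : ℝ) := by linarith
    have hwa1 : w a = 1 := by
      have hle : w a ≤ 1 := by
        have : ∑ y ∈ s, w y = w a + ∑ y ∈ s.erase a, w y := by
          rw [Finset.add_sum_erase _ _ ha]
        have hnn : 0 ≤ ∑ y ∈ s.erase a, w y :=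
          Finset.sum_nonneg fun y hy => hw0 y (Finset.mem_of_mem_erase hy)
        linarith [hw1 ▸ this]
      linarith
    have hva : v = a := by
      rw [← hwv]
      have : ∀ y ∈ s.erase a, w y • y = 0 := by
        intro y hy
        have hy' := Finset.mem_of_mem_erase hy
        have heq : w a + ∑ x ∈ s.erase a, w x = 1 := by
          rw [Finset.add_sum_erase _ _ ha, hw1]
        have h2 : ∑ z ∈ s.erase a, w z = 0 := by
          rw [hwa1] at heq; linarith
        have hle : w y ≤ ∑ z ∈ s.erase a, w z :=
          Finset.single_le_sum (f := w)
            (fun z hz => hw0 z (Finset.mem_of_mem_erase hz)) hy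
        have : w y = 0 := le_antisymm (h2 ▸ hle) (hw0 y hy')
        simp [this]
      rw [← Finset.add_sum_erase _ _ ha, Finset.sum_eq_zero this, hwa1, one_smul, add_zero]
    refine ⟨a, ha, a, ?_, ?_⟩
    · exact subset_convexHull ℝ _ ha
    · rw [hva, ← add_smul]; ring_nf; rw [one_smul]
  -- main case δ > 0
  · set w' : EuclideanSpace ℝ (Fin n) → ℝ :=
      fun y => (w y - if y = a then 1 - δ else 0) / δ with hw'
    have hw'0 : ∀ y ∈ s, 0 ≤ w' y := by
      intro y hy
      apply div_nonneg _ (le_of_lt hδ0)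
      rcases eq_or_ne y a with h | h
      · rw [h, if_pos rfl]; linarith
      · rw [if_neg h, sub_zero]; exact hw0 y hy
    have hite : ∑ y ∈ s, (if y = a then 1 - δ else 0 : ℝ) = 1 - δ := by
      rw [Finset.sum_ite_eq' s a fun _ => 1 - δ, if_pos ha]
    have hw'1 : ∑ y ∈ s, w' y = 1 := by
      simp only [hw']
      rw [← Finset.sum_div, Finset.sum_sub_distrib, hw1, hite]
      field_simp
      ring
    refine ⟨a, ha, ∑ y ∈ s, w' y • y, ?_, ?_⟩
    · exact Finset.mem_convexHull'.mpr ⟨w', hw'0, hw'1, rfl⟩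
    · rw [Finset.smul_sum]
      have : ∀ y ∈ s, δ • (w' y • y) = w y • y - (if y = a then 1 - δ else 0) • y := by
        intro y _
        rw [smul_smul, hw', ← sub_smul]
        congr 1
        field_simp
      rw [Finset.sum_congr rfl this, Finset.sum_sub_distrib, hwv]
      have : ∑ x ∈ s, (if x = a then 1 - δ else 0 : ℝ) • x = (1 - δ) • a := by
        simp only [ite_smul, zero_smul]
        rw [Finset.sum_ite_eq' s a fun y => (1 - δ) • y, if_pos ha]
      rw [this]; abel
end

section
/- Let S be a nonempty finite subset of ℝ^n, let v belong to the convex hull of S, and let the discount factor δ satisfy 1 − 1/|S| ≤ δ < 1. Then there exists a sequence (a_t)_{t≥1} of elements of S such that v = (1 − δ) · Σ_{t=1}^{∞} δ^{t−1} a_t. -/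
/-- One step of Sorin's construction: if `v` is in the convex hull of a finite
set `s` and `δ ≥ 1 - 1/|s|`, `δ > 0`, then there is `a ∈ s` with
`δ⁻¹ • (v - (1-δ) • a)` again in the convex hull. -/
lemma sorin_step {E : Type*} [AddCommGroup E] [Module ℝ E]
    (s : Finset E) (hs : s.Nonempty) (δ : ℝ) (hδpos : 0 < δ)
    (hδ1 : 1 - 1 / (s.card : ℝ) ≤ δ)
    {v : E} (hv : v ∈ convexHull ℝ (s : Set E)) :
    ∃ a ∈ s, δ⁻¹ • (v - (1 - δ) • a) ∈ convexHull ℝ (s : Set E) := by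
  classical
  obtain ⟨w, hw0, hw1, hwv⟩ := Finset.mem_convexHull'.1 hv
  have hcard : (0 : ℝ) < s.card := by
    exact_mod_cast Nat.pos_of_ne_zero (fun h => by simp [Finset.card_eq_zero.1 h] at hs)
  obtain ⟨a, ha, hwa⟩ : ∃ a ∈ s, (1 : ℝ) / s.card ≤ w a := by
    by_contra h
    push_neg at h
    have hlt : ∑ y ∈ s, w y < ∑ y ∈ s, (1 : ℝ) / s.card :=
      Finset.sum_lt_sum_of_nonempty hs (fun i hi => h i hi)
    rw [hw1, Finset.sum_const, nsmul_eq_mul] at hlt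
    rw [mul_one_div, div_self (ne_of_gt hcard)] at hlt
    exact lt_irrefl _ hlt
  have h1δ : 1 - δ ≤ w a := le_trans (by linarith) hwa
  refine ⟨a, ha, ?_⟩
  refine Finset.mem_convexHull'.2
    ⟨fun y => δ⁻¹ * (w y - if y = a then 1 - δ else 0), ?_, ?_, ?_⟩
  · intro y hy
    dsimp only
    by_cases hya : y = a
    · subst hya
      rw [if_pos rfl]
      exact mul_nonneg (le_of_lt (inv_pos.2 hδpos)) (by linarith)
    · simp only [if_neg hya, sub_zero]
      exact mul_nonneg (le_of_lt (inv_pos.2 hδpos)) (hw0 y hy)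
  · rw [← Finset.mul_sum, Finset.sum_sub_distrib, hw1, Finset.sum_ite_eq' s a, if_pos ha]
    field_simp
    ring
  · have : ∀ y ∈ s, (δ⁻¹ * (w y - if y = a then 1 - δ else 0)) • y
        = δ⁻¹ • (w y • y - (if y = a then (1 - δ) • y else 0)) := by
      intro y hy
      by_cases hya : y = a <;> simp [hya, mul_smul, sub_smul]
    rw [Finset.sum_congr rfl this, ← Finset.smul_sum, Finset.sum_sub_distrib,
      Finset.sum_ite_eq' s a, if_pos ha, hwv]

/-- Sorin's lemma: for a nonempty finite set `S ⊆ ℝ^n`, any `v` in the convex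
hull of `S` can, for any discount factor `δ` with `1 - 1/|S| ≤ δ < 1`, be
written as a discounted stream `v = (1-δ) • ∑_{t≥1} δ^{t-1} a_t` of elements
of `S` (here `a t` stands for `a_{t+1}`). -/
theorem stmt_6 {n : ℕ} (S : Set (EuclideanSpace ℝ (Fin n)))
    (hfin : S.Finite) (hne : S.Nonempty)
    (v : EuclideanSpace ℝ (Fin n)) (hv : v ∈ convexHull ℝ S)
    (δ : ℝ) (hδ1 : 1 - 1 / (S.ncard : ℝ) ≤ δ) (hδ2 : δ < 1) :
    ∃ a : ℕ → EuclideanSpace ℝ (Fin n), (∀ t, a t ∈ S) ∧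
      v = (1 - δ) • ∑' t : ℕ, δ ^ t • a t := by
  classical
  have hS : ((hfin.toFinset : Finset (EuclideanSpace ℝ (Fin n))) : Set _) = S := hfin.coe_toFinset
  have hcard : hfin.toFinset.card = S.ncard := (Set.ncard_eq_toFinset_card S hfin).symm
  have hsne : hfin.toFinset.Nonempty := by
    rwa [← Finset.coe_nonempty, hS]
  have hcardpos : 0 < S.ncard := Set.Nonempty.ncard_pos hfin hne
  rcases eq_or_lt_of_le (show (0:ℝ) ≤ δ by
    have h1 : (1:ℝ) ≤ S.ncard := by exact_mod_cast hcardpos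
    have : 1 / (S.ncard : ℝ) ≤ 1 := by
      rw [div_le_one (by exact_mod_cast hcardpos)]; exact h1
    linarith) with hδ0 | hδ0
  · -- δ = 0 : then S.ncard = 1 and S = {v}
    have hδ : δ = 0 := hδ0.symm
    subst hδ
    have hle1 : S.ncard ≤ 1 := by
      by_contra h
      push_neg at h
      have h2 : (2:ℝ) ≤ S.ncard := by exact_mod_cast h
      have : 1 / (S.ncard : ℝ) ≤ 1 / 2 :=
        one_div_le_one_div_of_le (by norm_num) h2
      linarith
    obtain ⟨a, hSa⟩ := Set.ncard_eq_one.1 (le_antisymm hle1 hcardpos)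
    subst hSa
    rw [convexHull_singleton] at hv
    refine ⟨fun _ => a, fun _ => rfl, ?_⟩
    have htsum : ∑' t : ℕ, (0:ℝ) ^ t • a = a := by
      rw [tsum_eq_single 0 (fun t ht => by simp [zero_pow ht])]
      simp
    rw [htsum, hv]
    simp
  · -- δ > 0
    have key : ∀ x : {x : EuclideanSpace ℝ (Fin n) // x ∈ convexHull ℝ S}, ∃ a : EuclideanSpace ℝ (Fin n), a ∈ S ∧
        δ⁻¹ • ((x : EuclideanSpace ℝ (Fin n)) - (1 - δ) • a) ∈ convexHull ℝ S := by
      intro x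
      have := sorin_step hfin.toFinset hsne δ hδ0
        (by rw [hcard]; exact hδ1) (by rw [hS]; exact x.2)
      rw [hS] at this
      obtain ⟨a, ha, h⟩ := this
      exact ⟨a, hS ▸ (Finset.mem_coe.2 ha), h⟩
    choose f hfS hfco using key
    set u : ℕ → {x : EuclideanSpace ℝ (Fin n) // x ∈ convexHull ℝ S} :=
      fun t => Nat.rec ⟨v, hv⟩
        (fun _ x => ⟨δ⁻¹ • ((x : EuclideanSpace ℝ (Fin n)) - (1 - δ) • f x), hfco x⟩) t with hu
    refine ⟨fun t => f (u t), fun t => hfS _, ?_⟩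
    have hrec : ∀ t, (u t : EuclideanSpace ℝ (Fin n)) = (1 - δ) • f (u t) + δ • (u (t + 1) : EuclideanSpace ℝ (Fin n)) := by
      intro t
      have : (u (t + 1) : EuclideanSpace ℝ (Fin n)) = δ⁻¹ • ((u t : EuclideanSpace ℝ (Fin n)) - (1 - δ) • f (u t)) := rfl
      rw [this, smul_smul, mul_inv_cancel₀ (ne_of_gt hδ0), one_smul]
      abel
    have hpartial : ∀ N, v = (1 - δ) • ∑ t ∈ Finset.range N, δ ^ t • f (u t)
        + δ ^ N • (u N : EuclideanSpace ℝ (Fin n)) := by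
      intro N
      induction N with
      | zero =>
        show v = (1 - δ) • ∑ t ∈ Finset.range 0, δ ^ t • f (u t) + δ ^ 0 • v
        simp
      | succ N ih =>
        rw [Finset.sum_range_succ, ih, hrec N, pow_succ]
        module
    -- boundedness
    obtain ⟨C, hC⟩ := ((hfin.isCompact_convexHull (𝕜 := ℝ)).isBounded).exists_norm_le
    have hCn : ∀ t, ‖f (u t)‖ ≤ C := fun t =>
      hC _ (subset_convexHull ℝ S (hfS (u t)))
    have hCu : ∀ t, ‖(u t : EuclideanSpace ℝ (Fin n))‖ ≤ C := fun t => hC _ (u t).2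
    have hC0 : 0 ≤ C := le_trans (norm_nonneg _) (hCu 0)
    have hnorm : ∀ t, ‖δ ^ t • f (u t)‖ ≤ C * δ ^ t := by
      intro t
      rw [norm_smul, Real.norm_eq_abs, abs_pow, abs_of_nonneg (le_of_lt hδ0), mul_comm]
      exact mul_le_mul_of_nonneg_right (hCn t) (pow_nonneg (le_of_lt hδ0) t)
    have hgeo : Summable (fun t : ℕ => C * δ ^ t) :=
      (summable_geometric_of_lt_one (le_of_lt hδ0) hδ2).mul_left C
    have hsum : Summable (fun t : ℕ => δ ^ t • f (u t)) :=
      Summable.of_norm_bounded hgeo hnorm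
    have hlim1 : Filter.Tendsto
        (fun N => (1 - δ) • ∑ t ∈ Finset.range N, δ ^ t • f (u t))
        Filter.atTop (nhds ((1 - δ) • ∑' t : ℕ, δ ^ t • f (u t))) :=
      (hsum.hasSum.tendsto_sum_nat).const_smul _
    have hlim2 : Filter.Tendsto (fun N => δ ^ N • (u N : EuclideanSpace ℝ (Fin n))) Filter.atTop (nhds 0) := by
      apply squeeze_zero_norm (fun N => ?_)
        (by simpa using (tendsto_pow_atTop_nhds_zero_of_lt_one (le_of_lt hδ0) hδ2).const_mul C)
      rw [norm_smul, Real.norm_eq_abs, abs_pow, abs_of_nonneg (le_of_lt hδ0), mul_comm]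
      exact mul_le_mul_of_nonneg_right (hCu N) (pow_nonneg (le_of_lt hδ0) N)
    have hlim3 : Filter.Tendsto
        (fun N => (1 - δ) • ∑ t ∈ Finset.range N, δ ^ t • f (u t))
        Filter.atTop (nhds v) := by
      have : (fun N => (1 - δ) • ∑ t ∈ Finset.range N, δ ^ t • f (u t))
          = fun N => v - δ ^ N • (u N : EuclideanSpace ℝ (Fin n)) := by
        funext N
        rw [hpartial N]
        abel
      rw [this]
      simpa using (tendsto_const_nhds (x := v)).sub hlim2
    exact tendsto_nhds_unique hlim3 hlim1
end

section
/- Let S be a nonempty finite subset of ℝ^n. For every ε > 0 there exists δ_ε ∈ (0,1) such that for every discount factor δ with δ_ε ≤ δ < 1 and every v in the convex hull of S, there exists a sequence (a_t)_{t≥1} of elements of S such that for every stage t ≥ 1 the continuation value satisfies ‖(1 − δ) · Σ_{s=0}^{∞} δ^{s} a_{t+s} − v‖ ≤ ε. -/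
open Filter Topology

lemma fm_aux_tsum {E : Type*} [NormedAddCommGroup E] [NormedSpace ℝ E] [CompleteSpace E]
    (δ : ℝ) (h0 : 0 < δ) (h1 : δ < 1) (u a : ℕ → E) (C : ℝ)
    (hb : ∀ t, ‖u t‖ ≤ C) (hba : ∀ t, ‖a t‖ ≤ C)
    (hrec : ∀ t, u t = (1 - δ) • a t + δ • u (t + 1)) (t : ℕ) :
    (1 - δ) • (∑' s : ℕ, δ ^ s • a (t + s)) = u t := by
  have hδ0 : (0:ℝ) ≤ δ := h0.le
  have hsum : Summable (fun s : ℕ => δ ^ s • a (t + s)) := by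
    apply Summable.of_norm_bounded (g := fun s : ℕ => C * δ ^ s)
      ((summable_geometric_of_lt_one hδ0 h1).mul_left C)
    intro s
    rw [norm_smul, norm_pow, Real.norm_of_nonneg hδ0, mul_comm]
    exact mul_le_mul_of_nonneg_right (hba _) (pow_nonneg hδ0 s)
  have hpartial : ∀ N : ℕ, (1 - δ) • (∑ s ∈ Finset.range N, δ ^ s • a (t + s))
      = u t - δ ^ N • u (t + N) := by
    intro N
    induction N with
    | zero => simp
    | succ N ih =>
      rw [Finset.sum_range_succ, smul_add, ih, show t + (N+1) = (t + N) + 1 by ring]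
      have h2 : δ ^ N • u (t + N) = δ ^ N • ((1 - δ) • a (t + N) + δ • u (t + N + 1)) := by
        rw [← hrec (t + N)]
      rw [h2]
      module
  have htend1 : Tendsto (fun N => (1 - δ) • (∑ s ∈ Finset.range N, δ ^ s • a (t + s)))
      atTop (𝓝 ((1 - δ) • (∑' s : ℕ, δ ^ s • a (t + s)))) :=
    (hsum.hasSum.tendsto_sum_nat).const_smul _
  have htend0 : Tendsto (fun N : ℕ => δ ^ N • u (t + N)) atTop (𝓝 (0 : E)) := by
    rw [tendsto_zero_iff_norm_tendsto_zero]
    apply squeeze_zero (fun N => norm_nonneg _) (fun N => ?_)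
      (by simpa using (tendsto_pow_atTop_nhds_zero_of_lt_one hδ0 h1).const_mul C)
    rw [norm_smul, norm_pow, Real.norm_of_nonneg hδ0, mul_comm]
    exact mul_le_mul_of_nonneg_right (hb _) (pow_nonneg hδ0 N)
  have htend2 : Tendsto (fun N => u t - δ ^ N • u (t + N)) atTop (𝓝 (u t)) := by
    simpa using tendsto_const_nhds.sub htend0
  exact tendsto_nhds_unique (by simpa only [hpartial] using htend1) htend2

set_option maxHeartbeats 1000000 in
/-- Fudenberg–Maskin (1991) lemma: for a nonempty finite set `S ⊆ ℝ^n` and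
any `ε > 0`, there is a threshold `δ_ε ∈ (0,1)` such that for every discount
factor `δ ∈ [δ_ε, 1)` and every `v` in the convex hull of `S` there is a
sequence of elements of `S` all of whose continuation values are within `ε`
of `v` (here `a t` stands for `a_{t+1}`). -/
theorem stmt_7 {n : ℕ} (S : Set (EuclideanSpace ℝ (Fin n)))
    (hfin : S.Finite) (hne : S.Nonempty) :
    ∀ ε > (0 : ℝ), ∃ δε ∈ Set.Ioo (0 : ℝ) 1,
      ∀ δ : ℝ, δε ≤ δ → δ < 1 →
        ∀ v ∈ convexHull ℝ S,
          ∃ a : ℕ → EuclideanSpace ℝ (Fin n), (∀ t, a t ∈ S) ∧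
            ∀ t : ℕ, ‖(1 - δ) • (∑' s : ℕ, δ ^ s • a (t + s)) - v‖ ≤ ε := by
  classical
  intro ε hε
  set T : Finset (EuclideanSpace ℝ (Fin n)) := hfin.toFinset with hTdef
  have hco : S = ↑T := (hfin.coe_toFinset).symm
  have hTne : T.Nonempty := by
    rw [hTdef, Set.Finite.toFinset_nonempty]; exact hne
  set m : ℕ := T.card with hmdef
  have hm1 : 1 ≤ (m:ℝ) := by exact_mod_cast hTne.card_pos
  obtain ⟨R, hR1, hR⟩ : ∃ R : ℝ, 1 ≤ R ∧ ∀ x ∈ T, ‖x‖ ≤ R := by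
    have hs0 : (0:ℝ) ≤ ∑ x ∈ T, ‖x‖ := Finset.sum_nonneg (fun y _ => norm_nonneg y)
    refine ⟨1 + ∑ x ∈ T, ‖x‖, by linarith, fun x hx => ?_⟩
    have := Finset.single_le_sum (f := fun x => ‖x‖) (fun y _ => norm_nonneg y) hx
    linarith
  have hRpos : (0:ℝ) < R := by linarith
  set β₀ : ℝ := min (1/(2*(m:ℝ))) (ε/(2*(m:ℝ)^3*R)) with hβ₀def
  have hmpos : (0:ℝ) < (m:ℝ) := by linarith
  have hm3R : (0:ℝ) < 2*(m:ℝ)^3*R := by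
    have := pow_pos hmpos 3
    nlinarith
  have hβ₀pos : 0 < β₀ := by
    apply lt_min
    · apply div_pos one_pos; linarith
    · exact div_pos hε hm3R
  have hβ₀half : β₀ ≤ 1/2 := by
    have h1 : β₀ ≤ 1/(2*(m:ℝ)) := min_le_left _ _
    have h2 : 1/(2*(m:ℝ)) ≤ 1/2 := by
      apply div_le_div_of_nonneg_left (by norm_num) (by norm_num) (by linarith)
    linarith
  refine ⟨1 - β₀, ⟨by linarith, by linarith⟩, ?_⟩
  intro δ hδl hδu v hv
  have hδpos : (0:ℝ) < δ := by linarith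
  set β : ℝ := 1 - δ with hβdef
  have hβpos : 0 < β := by simp only [hβdef]; linarith
  have hββ₀ : β ≤ β₀ := by simp only [hβdef]; linarith
  have hβhalf : β ≤ 1/2 := le_trans hββ₀ hβ₀half
  have hmβ : (m:ℝ) * β ≤ 1/2 := by
    have : β ≤ 1/(2*(m:ℝ)) := le_trans hββ₀ (min_le_left _ _)
    calc (m:ℝ) * β ≤ (m:ℝ) * (1/(2*(m:ℝ))) :=
          mul_le_mul_of_nonneg_left this (by linarith)
      _ = 1/2 := by field_simp
  rw [hco] at hv
  obtain ⟨w, hw0, hw1, hwv⟩ := (Finset.mem_convexHull).mp hv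
  have hv2 : ∑ x ∈ T, w x • x = v := by
    rw [← hwv, Finset.centerMass_eq_of_sum_1 _ _ hw1]
    simp
  set ρ : EuclideanSpace ℝ (Fin n) → ℝ := fun x => min (w x) ((m:ℝ)*β) with hρdef
  have hρ0 : ∀ x ∈ T, 0 ≤ ρ x := fun x hx => le_min (hw0 x hx) (mul_nonneg hmpos.le hβpos.le)
  have hρw : ∀ x, ρ x ≤ w x := fun x => min_le_left _ _
  have hρb : ∀ x, ρ x ≤ (m:ℝ)*β := fun x => min_le_right _ _
  set Inv : (EuclideanSpace ℝ (Fin n) → ℝ) → Prop :=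
    fun μ => (∀ x ∈ T, w x - ρ x ≤ μ x) ∧ ∑ x ∈ T, μ x = 1 with hInvdef
  have hsumρ : (m:ℝ)*β ≤ ∑ x ∈ T, ρ x := by
    by_cases hc : ∃ x ∈ T, (m:ℝ)*β ≤ w x
    · obtain ⟨x, hx, hxw⟩ := hc
      have h1 : ρ x = (m:ℝ)*β := min_eq_right hxw
      have h2 := Finset.single_le_sum hρ0 hx
      linarith
    · push_neg at hc
      have h1 : ∑ x ∈ T, ρ x = ∑ x ∈ T, w x :=
        Finset.sum_congr rfl fun x hx => min_eq_left (hc x hx).le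
      rw [h1, hw1]; nlinarith [hmβ]
  have hInvw : Inv w := ⟨fun x hx => by linarith [hρ0 x hx], hw1⟩
  -- the one-step construction
  have step : ∀ μ : {f : EuclideanSpace ℝ (Fin n) → ℝ // Inv f},
      ∃ j : EuclideanSpace ℝ (Fin n), ∃ ν : {f : EuclideanSpace ℝ (Fin n) → ℝ // Inv f},
        j ∈ T ∧ ∀ x, μ.1 x = (if x = j then β else 0) + δ * ν.1 x := by
    rintro ⟨μ, hlow, hsum1⟩
    have hμ0 : ∀ x ∈ T, 0 ≤ μ x := fun x hx =>
      le_trans (by linarith [hρw x]) (hlow x hx)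
    have hj : ∃ j ∈ T, w j - ρ j + β ≤ μ j := by
      by_contra hcon
      push_neg at hcon
      have h1 : ∑ x ∈ T, μ x < ∑ x ∈ T, (w x - ρ x + β) :=
        Finset.sum_lt_sum_of_nonempty hTne (fun i hi => hcon i hi)
      have h2 : ∑ x ∈ T, (w x - ρ x + β) = 1 - (∑ x ∈ T, ρ x) + (m:ℝ)*β := by
        rw [Finset.sum_add_distrib, Finset.sum_sub_distrib, hw1, Finset.sum_const,
          ← hmdef, nsmul_eq_mul]
      rw [hsum1, h2] at h1
      linarith
    obtain ⟨j, hjT, hjμ⟩ := hj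
    have hδne : δ ≠ 0 := ne_of_gt hδpos
    refine ⟨j, ⟨fun x => (μ x - if x = j then β else 0) / δ, ?_, ?_⟩, hjT, ?_⟩
    · intro x hx
      rw [le_div_iff₀ hδpos]
      by_cases hxj : x = j
      · subst hxj
        rw [if_pos rfl]
        have h0 : 0 ≤ w x - ρ x := by linarith [hρw x]
        nlinarith
      · simp only [if_neg hxj, sub_zero]
        nlinarith [hlow x hx, hμ0 x hx, hρw x]
    · rw [← Finset.sum_div, Finset.sum_sub_distrib, hsum1, Finset.sum_ite_eq' T j
        (fun _ => β), if_pos hjT]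
      rw [hβdef]
      field_simp
      ring
    · intro x
      rw [mul_div_cancel₀ _ hδne]
      ring
  have hdev : ∀ μ : EuclideanSpace ℝ (Fin n) → ℝ, Inv μ →
      ∀ x ∈ T, |μ x - w x| ≤ (m:ℝ) * ((m:ℝ)*β) := by
    rintro μ ⟨hlow, hsum1⟩ x hx
    rw [abs_le]
    constructor
    · have := hlow x hx
      have h1 : -ρ x ≤ μ x - w x := by linarith
      have h2 : -((m:ℝ)*((m:ℝ)*β)) ≤ -ρ x := by
        have h3 := hρb x
        have h4 : (0:ℝ) ≤ ((m:ℝ)-1) * ((m:ℝ)*β) :=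
          mul_nonneg (by linarith) (mul_nonneg hmpos.le hβpos.le)
        nlinarith
      linarith
    · have hzero : ∑ y ∈ T, (μ y - w y) = 0 := by
        rw [Finset.sum_sub_distrib, hsum1, hw1, sub_self]
      have hsplit : (μ x - w x) + ∑ y ∈ T.erase x, (μ y - w y) = 0 := by
        exact (Finset.add_sum_erase T (fun y => μ y - w y) hx).trans hzero
      have hbound : -(∑ y ∈ T.erase x, (μ y - w y)) ≤ ∑ y ∈ T.erase x, ρ y := by
        rw [← Finset.sum_neg_distrib]
        apply Finset.sum_le_sum
        intro y hy
        have hyT := Finset.mem_of_mem_erase hy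
        have := hlow y hyT
        linarith
      have hbound2 : ∑ y ∈ T.erase x, ρ y ≤ (m:ℝ) * ((m:ℝ)*β) := by
        have h5 : ∑ y ∈ T.erase x, ρ y ≤ ∑ y ∈ T, ρ y :=
          Finset.sum_le_sum_of_subset_of_nonneg (Finset.erase_subset x T)
            (fun y hy _ => hρ0 y hy)
        have h6 : ∑ y ∈ T, ρ y ≤ ∑ y ∈ T, (m:ℝ)*β :=
          Finset.sum_le_sum (fun y _ => hρb y)
        rw [Finset.sum_const, nsmul_eq_mul, ← hmdef] at h6
        linarith
      linarith
  have hdist : ∀ μ : EuclideanSpace ℝ (Fin n) → ℝ, Inv μ →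
      ‖(∑ x ∈ T, μ x • x) - v‖ ≤ ε := by
    intro μ hInvμ
    have h1 : (∑ x ∈ T, μ x • x) - v = ∑ x ∈ T, (μ x - w x) • x := by
      rw [Finset.sum_congr rfl (fun x _ => sub_smul (μ x) (w x) x),
        Finset.sum_sub_distrib, hv2]
    rw [h1]
    calc ‖∑ x ∈ T, (μ x - w x) • x‖
        ≤ ∑ x ∈ T, ‖(μ x - w x) • x‖ := norm_sum_le _ _
      _ ≤ ∑ x ∈ T, ((m:ℝ) * ((m:ℝ)*β)) * R := by
          apply Finset.sum_le_sum
          intro x hx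
          rw [norm_smul, Real.norm_eq_abs]
          apply mul_le_mul (hdev μ hInvμ x hx) (hR x hx) (norm_nonneg x) ?_
          have h4 : (0:ℝ) ≤ (m:ℝ)*β := mul_nonneg hmpos.le hβpos.le
          nlinarith
      _ = (m:ℝ) * ((m:ℝ) * ((m:ℝ)*β) * R) := by
          rw [Finset.sum_const, nsmul_eq_mul, ← hmdef]; try ring
      _ ≤ ε := by
          have hβε : β ≤ ε/(2*(m:ℝ)^3*R) := le_trans hββ₀ (min_le_right _ _)
          have h2 : (m:ℝ)^3 * R * β ≤ (m:ℝ)^3 * R * (ε/(2*(m:ℝ)^3*R)) :=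
            mul_le_mul_of_nonneg_left hβε (mul_nonneg (pow_nonneg hmpos.le 3) hRpos.le)
          have h3 : (m:ℝ)^3 * R * (ε/(2*(m:ℝ)^3*R)) = ε/2 := by field_simp
          nlinarith
  have hubd' : ∀ μ : EuclideanSpace ℝ (Fin n) → ℝ, Inv μ →
      ‖∑ x ∈ T, μ x • x‖ ≤ R := by
    intro μ hInvμ
    have hμnn : ∀ x ∈ T, 0 ≤ μ x := fun x hx =>
      le_trans (by linarith [hρw x]) (hInvμ.1 x hx)
    calc ‖∑ x ∈ T, μ x • x‖ ≤ ∑ x ∈ T, ‖μ x • x‖ := norm_sum_le _ _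
      _ ≤ ∑ x ∈ T, μ x * R := by
          apply Finset.sum_le_sum
          intro x hx
          rw [norm_smul, Real.norm_of_nonneg (hμnn x hx)]
          exact mul_le_mul_of_nonneg_left (hR x hx) (hμnn x hx)
      _ = R := by rw [← Finset.sum_mul, hInvμ.2, one_mul]
  choose J N hJT hrecw using step
  let seq : ℕ → {f : EuclideanSpace ℝ (Fin n) → ℝ // Inv f} :=
    fun t => Nat.rec ⟨w, hInvw⟩ (fun _ p => N p) t
  have hseq : ∀ t, seq (t+1) = N (seq t) := fun t => rfl
  let a : ℕ → EuclideanSpace ℝ (Fin n) := fun t => J (seq t)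
  let u : ℕ → EuclideanSpace ℝ (Fin n) := fun t => ∑ x ∈ T, (seq t).1 x • x
  have hubd : ∀ t, ‖u t‖ ≤ R := fun t => hubd' (seq t).1 (seq t).2
  have habd : ∀ t, ‖a t‖ ≤ R := fun t => hR _ (hJT (seq t))
  have hurec : ∀ t, u t = (1 - δ) • a t + δ • u (t+1) := by
    intro t
    have h1 : ∀ x, (seq t).1 x = (if x = a t then β else 0) + δ * (seq (t+1)).1 x := by
      intro x
      rw [hseq t]
      exact hrecw (seq t) x
    calc u t = ∑ x ∈ T, ((if x = a t then β else 0) + δ * (seq (t+1)).1 x) • x := by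
          apply Finset.sum_congr rfl
          intro x _
          rw [← h1 x]
      _ = (∑ x ∈ T, (if x = a t then β else 0) • x)
            + ∑ x ∈ T, (δ * (seq (t+1)).1 x) • x := by
          rw [← Finset.sum_add_distrib]
          apply Finset.sum_congr rfl
          intro x _
          rw [add_smul]
      _ = (1 - δ) • a t + δ • u (t+1) := by
          congr 1
          · rw [show (∑ x ∈ T, (if x = a t then β else 0) • x)
                = ∑ x ∈ T, (if x = a t then β • x else 0) from
              Finset.sum_congr rfl (fun x _ => by split <;> simp)]
            rw [Finset.sum_ite_eq' T (a t) (fun x => β • x), if_pos (hJT (seq t))]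
          · rw [Finset.smul_sum]
            apply Finset.sum_congr rfl
            intro x _
            rw [mul_smul]
  refine ⟨a, fun t => by rw [hco]; exact hJT (seq t), fun t => ?_⟩
  rw [fm_aux_tsum δ hδpos hδu u a R hubd habd hurec t]
  exact hdist (seq t).1 (seq t).2
end

section
/- Let v̄, v, v' be real numbers with v > v' > 0, let T be a natural number with v̄/v' < 1 + T, and let L be a natural number. Then there exists δ̄ ∈ (0,1) such that for every δ ∈ (δ̄, 1): v̄ + δ·(1 − δ^L)/(1 − δ)·v + δ^{L+T+1}/(1 − δ)·v' < v/(1 − δ). -/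
/-!
Multiplying by `1 - δ > 0` turns the inequality into positivity of
`g δ = (1 - δ) (v - v̄) + δ ^ (L + 1) v - δ ^ (L + T + 1) v'`. The one-shot gain `v̄` is weighted by
`1 - δ`, so it disappears in the limit: `g 1 = v - v' > 0`, and by continuity `g > 0` just below `1`.
-/

open Filter Topology Set

lemma exists_Ioo_forall_of_eventually_nhdsLT_one {p : ℝ → Prop} (h : ∀ᶠ δ in 𝓝[<] 1, p δ) :
    ∃ δbar ∈ Ioo (0 : ℝ) 1, ∀ δ ∈ Ioo δbar 1, p δ := by
  obtain ⟨l, hl, hsub⟩ := mem_nhdsLT_iff_exists_Ioo_subset.mp h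
  refine ⟨max l (1 / 2), ⟨by positivity, max_lt hl (by norm_num)⟩, fun δ hδ => hsub ?_⟩
  exact ⟨(le_max_left _ _).trans_lt hδ.1, hδ.2⟩

lemma deviation_lt_conformity_iff (vbar v v' : ℝ) (L N : ℕ) {δ : ℝ} (hδ : δ < 1) :
    vbar + δ * (1 - δ ^ L) / (1 - δ) * v + δ ^ N / (1 - δ) * v' < v / (1 - δ) ↔
      0 < (1 - δ) * (v - vbar) + δ ^ (L + 1) * v - δ ^ N * v' := by
  have hpos : 0 < 1 - δ := sub_pos.mpr hδ
  rw [← sub_pos]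
  have hdiff : v / (1 - δ) - (vbar + δ * (1 - δ ^ L) / (1 - δ) * v + δ ^ N / (1 - δ) * v') =
      ((1 - δ) * (v - vbar) + δ ^ (L + 1) * v - δ ^ N * v') / (1 - δ) := by
    field_simp
    ring
  rw [hdiff, div_pos_iff_of_pos_right hpos]

theorem stmt_11_general (vbar v v' : ℝ) (hvv' : v > v')
    (T : ℕ) (L : ℕ) :
    ∃ δbar ∈ Set.Ioo (0 : ℝ) 1, ∀ δ ∈ Set.Ioo δbar 1,
      vbar + δ * (1 - δ ^ L) / (1 - δ) * v + δ ^ (L + T + 1) / (1 - δ) * v'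
        < v / (1 - δ) := by
  set g : ℝ → ℝ := fun δ => (1 - δ) * (v - vbar) + δ ^ (L + 1) * v - δ ^ (L + T + 1) * v'
  have hg_one : 0 < g 1 := by simpa [g] using hvv'
  have hg_cont : ContinuousAt g 1 := by fun_prop
  have hg_pos : ∀ᶠ δ in 𝓝[<] 1, 0 < g δ :=
    nhdsWithin_le_nhds (hg_cont.eventually (lt_mem_nhds hg_one))
  apply exists_Ioo_forall_of_eventually_nhdsLT_one
  filter_upwards [hg_pos, self_mem_nhdsWithin] with δ hδ hδ_lt
  exact (deviation_lt_conformity_iff vbar v v' L (L + T + 1) hδ_lt).mpr hδ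

/-- No profitable Phase I deviation: if `v > v' > 0` and `v̄/v' < 1 + T`, then
for all discount factors close enough to 1 the deviator's discounted payoff
bound is strictly less than the equilibrium payoff `v/(1-δ)`. -/
theorem stmt_11 (vbar v v' : ℝ) (hvv' : v > v') (hv' : v' > 0)
    (T : ℕ) (hT : vbar / v' < 1 + (T : ℝ)) (L : ℕ) :
    ∃ δbar ∈ Set.Ioo (0 : ℝ) 1, ∀ δ ∈ Set.Ioo δbar 1,
      vbar + δ * (1 - δ ^ L) / (1 - δ) * v + δ ^ (L + T + 1) / (1 - δ) * v'
        < v / (1 - δ) :=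
  stmt_11_general vbar v v' hvv' T L
end
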